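/- In a critical graph, no vertex of degree 2 lies on a 4-cycle. -/

import Mathlib

open SimpleGraph

/-- A set of vertices is independent if no two of its members are adjacent. -/
def IsIndepSet {V : Type*} (G : SimpleGraph V) (s : Set V) : Prop :=
  s.Pairwise fun a b => ¬ G.Adj a b

/-- The independence number of a graph: the maximum size of an independent set. -/
noncomputable def alpha {V : Type*} (G : SimpleGraph V) : ℕ :=
  sSup {n | ∃ s : Finset V, _root_.IsIndepSet G (s : Set V) ∧ s.card = n}

/-- A graph is critical if deleting any edge strictly increases the independence number. -/
def IsCritical {V : Type*} (G : SimpleGraph V) : Prop :=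
  ∀ e ∈ G.edgeSet, alpha G < alpha (G.deleteEdges {e})

/-!
Delete the edge `bc`. By criticality some independent set `S` of `G - bc` is larger than `α(G)`,
so it must contain both `b` and `c`; then `a` (a neighbour of `b`) and `d` (a neighbour of `c`)
lie outside `S`. As the only neighbours of `a` are `b` and `d`, exchanging `b` for `a` turns `S`
into an independent set of `G` of the same size, which is impossible.
-/

open Finset

namespace SimpleGraph

variable {V : Type*} {G : SimpleGraph V}

theorem isIndepSet_of_deleteEdges_of_notMem {s : Set V} {u v : V}
    (hs : (G.deleteEdges {s(u, v)}).IsIndepSet s) (huv : u ∉ s ∨ v ∉ s) : G.IsIndepSet s := by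
  intro x hx y hy hxy hadj
  refine hs hx hy hxy ((deleteEdges_adj ..).2 ⟨hadj, fun he => ?_⟩)
  rcases Sym2.eq_iff.1 (Set.mem_singleton_iff.1 he) with ⟨rfl, rfl⟩ | ⟨rfl, rfl⟩ <;> tauto

theorem IsIndepSet.insert_of_forall_not_adj {s : Set V} {a : V} (hs : G.IsIndepSet s)
    (ha : ∀ x ∈ s, ¬G.Adj a x) : G.IsIndepSet (insert a s) :=
  hs.insert fun x hx _ => ⟨ha x hx, fun h => ha x hx h.symm⟩

theorem neighborFinset_eq_pair [Fintype V] [DecidableRel G.Adj] [DecidableEq V] {a b d : V}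
    (hdeg : G.degree a = 2) (hab : G.Adj a b) (had : G.Adj a d) (hbd : b ≠ d) :
    G.neighborFinset a = {b, d} := by
  refine (eq_of_subset_of_card_le ?_ ?_).symm
  · simp [insert_subset_iff, hab, had]
  · rw [card_neighborFinset_eq_degree, hdeg, card_pair hbd]

end SimpleGraph

theorem alpha_eq_indepNum {V : Type*} (G : SimpleGraph V) : alpha G = G.indepNum := by
  simp only [alpha, indepNum, isNIndepSet_iff]
  rfl

theorem IsCritical.exists_isIndepSet_deleteEdges {V : Type*} [Finite V] {G : SimpleGraph V}
    (hG : IsCritical G) {u v : V} (huv : G.Adj u v) :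
    ∃ s : Finset V, (G.deleteEdges {s(u, v)}).IsIndepSet s ∧ G.indepNum < #s ∧ u ∈ s ∧ v ∈ s := by
  obtain ⟨s, hs, hcard⟩ := (G.deleteEdges {s(u, v)}).exists_isNIndepSet_indepNum
  have hlt : G.indepNum < #s := by
    simpa only [hcard, alpha_eq_indepNum] using hG s(u, v) huv
  refine ⟨s, hs, hlt, ?_⟩
  by_contra! hmem
  have hind : G.IsIndepSet (s : Set V) :=
    isIndepSet_of_deleteEdges_of_notMem hs (by simpa only [mem_coe, or_iff_not_imp_left, not_not])
  exact hlt.not_ge hind.card_le_indepNum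

/-- In a critical graph, no vertex of degree `2` lies on a `4`-cycle. -/
theorem stmt_5 {V : Type*} [Fintype V] (G : SimpleGraph V) [DecidableRel G.Adj]
    (hcrit : IsCritical G) (a b c d : V)
    (hab : G.Adj a b) (hbc : G.Adj b c) (hcd : G.Adj c d) (hda : G.Adj d a)
    (hac : a ≠ c) (hbd : b ≠ d) :
    G.degree a ≠ 2 := by
  classical
  intro hdeg
  obtain ⟨s, hs, hlt, hbs, hcs⟩ := hcrit.exists_isIndepSet_deleteEdges hbc
  have has : a ∉ s := fun has => hs has hbs hab.ne (by simp [hab, hab.ne, hac])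
  have hds : d ∉ s := fun hds => hs hcs hds hcd.ne (by simp [hcd, hbd.symm, hbc.ne.symm])
  have hN := neighborFinset_eq_pair hdeg hab hda.symm hbd
  have hswap : G.IsIndepSet (↑(insert a (s.erase b)) : Set V) := by
    rw [coe_insert]
    refine (isIndepSet_of_deleteEdges_of_notMem (hs.mono (erase_subset b s))
      (.inl (notMem_erase b s))).insert_of_forall_not_adj fun x hx hax => ?_
    have hx' : x ∈ G.neighborFinset a := (mem_neighborFinset G a x).2 hax
    rw [hN, mem_insert, mem_singleton] at hx'
    rcases hx' with rfl | rfl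
    exacts [notMem_erase x s hx, hds (mem_of_mem_erase hx)]
  have hcard : #(insert a (s.erase b)) = #s := by
    rw [card_insert_of_notMem (fun h => has (mem_of_mem_erase h)), card_erase_add_one hbs]
  exact hlt.not_ge (hcard ▸ hswap.card_le_indepNum)
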